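/- arXiv:math/9907120 — 3 statements merged into one kernel-verified Lean document; each statement's English description precedes it below -/
import Mathlib

section
/- As an identity of formal power series in ℤ[[q]], the specialization z = q of the Jacobi triple product gives ∏_{n=1}^{∞} (1 - q^{4n})(1 + q^{2n}) = ∑_{n=0}^{∞} q^{n² + n}. -/
open Finset

noncomputable section

namespace JTPaux

abbrev R : Type := PowerSeries ℤ

def Q : R := PowerSeries.X

/-- Gaussian binomial coefficient in the variable `Q^2`, defined by the q-Pascal rule. -/
def gb : ℕ → ℕ → R
  | _, 0 => 1
  | 0, _+1 => 0
  | n+1, k+1 => gb n k + Q ^ (2*(k+1)) * gb n (k+1)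

@[simp] lemma gb_zero (n : ℕ) : gb n 0 = 1 := by cases n <;> rfl

lemma gb_succ (n k : ℕ) : gb (n+1) (k+1) = gb n k + Q ^ (2*(k+1)) * gb n (k+1) := rfl

lemma gb_of_lt : ∀ {n k : ℕ}, n < k → gb n k = 0 := by
  intro n
  induction n with
  | zero => intro k hk; obtain ⟨k, rfl⟩ := Nat.exists_eq_add_of_lt hk; rfl
  | succ n ih =>
    intro k hk
    obtain ⟨j, rfl⟩ : ∃ j, k = j + 1 := ⟨k - 1, by omega⟩
    rw [gb_succ, ih (by omega), ih (by omega), mul_zero, add_zero]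

@[simp] lemma gb_self : ∀ n : ℕ, gb n n = 1 := by
  intro n
  induction n with
  | zero => rfl
  | succ n ih => rw [gb_succ, ih, gb_of_lt (by omega), mul_zero, add_zero]

lemma gb_one : ∀ n : ℕ, gb n 1 = ∑ i ∈ range n, Q ^ (2*i) := by
  intro n
  induction n with
  | zero => simp [gb]
  | succ n ih =>
    rw [show (1 : ℕ) = 0 + 1 from rfl, gb_succ, gb_zero, ih, Finset.sum_range_succ',
      Finset.mul_sum]
    rw [add_comm]
    congr 1
    apply Finset.sum_congr rfl
    intro i _
    rw [← pow_add]
    congr 1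
    ring

/-- Second Pascal rule. -/
lemma gb_R2 : ∀ n k : ℕ, k ≤ n → gb (n+1) (k+1) = Q^(2*(n-k)) * gb n k + gb n (k+1) := by
  intro n
  induction n with
  | zero =>
    intro k hk; interval_cases k
    simp [gb_succ, gb_of_lt]
  | succ n ih =>
    intro k hk
    match k with
    | 0 =>
      rw [gb_one, gb_one, gb_zero, Finset.sum_range_succ, mul_one, Nat.sub_zero, add_comm]
    | j+1 =>
      rcases Nat.lt_or_ge j n with hj | hj
      · -- j + 1 ≤ n
        obtain ⟨t, rfl⟩ : ∃ t, n = j + 1 + t := ⟨n - j - 1, by omega⟩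
        have A : gb (j+1+t+1) (j+1) = Q^(2*(t+1)) * gb (j+1+t) j + gb (j+1+t) (j+1) := by
          have h := ih j (by omega)
          rwa [show j+1+t-j = t+1 by omega] at h
        have B : gb (j+1+t+1) (j+1+1) = Q^(2*t) * gb (j+1+t) (j+1) + gb (j+1+t) (j+1+1) := by
          have h := ih (j+1) (by omega)
          rwa [show j+1+t-(j+1) = t by omega] at h
        rw [show j+1+t+1 - (j+1) = t+1 by omega]
        conv_rhs => rw [gb_succ (j+1+t) j, gb_succ (j+1+t) (j+1)]
        rw [show (j:ℕ)+1+1 = (j+1)+1 from rfl, gb_succ (j+1+t+1) (j+1), A, B]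
        ring
      · -- j ≥ n, and j + 1 ≤ n + 1 so j = n
        have : j = n := by omega
        subst this
        rw [gb_self, gb_self, gb_of_lt (by omega), Nat.sub_self, pow_zero, one_mul, add_zero]

lemma gb_step (n j : ℕ) (h : j + 1 ≤ n) :
    gb (n+2) (j+2) = Q^(2*(n-j)) * gb n j + (1 + Q^(2*(n+1))) * gb n (j+1)
      + Q^(2*(j+2)) * gb n (j+2) := by
  obtain ⟨t, rfl⟩ : ∃ t, n = j + 1 + t := ⟨n - j - 1, by omega⟩
  rw [show (j+1+t)+2 = (j+1+t+1)+1 from rfl, show (j:ℕ)+2 = (j+1)+1 from rfl,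
    gb_succ (j+1+t+1) (j+1), gb_R2 (j+1+t) j (by omega), gb_R2 (j+1+t) (j+1) (by omega),
    show j+1+t-j = t+1 by omega, show j+1+t-(j+1) = t by omega]
  ring
def pq (m : ℕ) : R := ∏ j ∈ range m, (1 - Q^(2*(j+1)))

lemma pq_succ (m : ℕ) : pq (m+1) = pq m * (1 - Q^(2*(m+1))) := Finset.prod_range_succ _ m

@[simp] lemma pq_zero : pq 0 = 1 := rfl

lemma gb_mul_pq : ∀ n k : ℕ, k ≤ n → gb n k * pq k * pq (n - k) = pq n := by
  intro n
  induction n with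
  | zero => intro k hk; interval_cases k; simp
  | succ n ih =>
    intro k hk
    match k with
    | 0 => simp
    | j+1 =>
      rcases Nat.lt_or_ge j n with hj | hj
      · obtain ⟨t, rfl⟩ : ∃ t, n = j + 1 + t := ⟨n - j - 1, by omega⟩
        have A := ih j (by omega)
        have B := ih (j+1) (by omega)
        rw [show j+1+t-j = t+1 by omega] at A
        rw [show j+1+t-(j+1) = t by omega] at B
        rw [show j+1+t+1-(j+1) = t+1 by omega, gb_succ, pq_succ j, pq_succ t,
          pq_succ (j+1+t)]
        calc (gb (j+1+t) j + Q ^ (2*(j+1)) * gb (j+1+t) (j+1)) * (pq j * (1 - Q^(2*(j+1)))) *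
              (pq t * (1 - Q^(2*(t+1))))
            = (gb (j+1+t) j * pq j * pq (t+1)) * (1 - Q^(2*(j+1)))
              + Q ^ (2*(j+1)) * (gb (j+1+t) (j+1) * pq (j+1) * pq t) * (1 - Q^(2*(t+1))) := by
              rw [pq_succ t, pq_succ j]; ring
          _ = pq (j+1+t) * ((1 - Q^(2*(j+1))) + Q ^ (2*(j+1)) * (1 - Q^(2*(t+1)))) := by
              rw [A, B]; ring
          _ = pq (j+1+t) * (1 - Q^(2*(j+1+t+1))) := by ring
      · have : j = n := by omega
        subst this
        simp
lemma constantCoeff_pq (m : ℕ) : PowerSeries.constantCoeff (pq m) = 1 := by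
  rw [pq, map_prod]
  apply Finset.prod_eq_one
  intro j _
  simp [Q]

lemma pq_ne_zero (m : ℕ) : pq m ≠ 0 := fun h => by simpa [h] using constantCoeff_pq m

lemma gb_symm (n k : ℕ) (hk : k ≤ n) : gb n k = gb n (n - k) := by
  have h1 := gb_mul_pq n k hk
  have h2 := gb_mul_pq n (n-k) (by omega)
  rw [show n - (n-k) = k by omega] at h2
  have : gb n k * pq k * pq (n-k) = gb n (n-k) * pq k * pq (n-k) := by
    rw [h1]; rw [← h2]; ring
  have hpk := pq_ne_zero k
  have hpnk := pq_ne_zero (n-k)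
  simp only [mul_eq_mul_right_iff] at this
  rcases this with h | h
  · rcases h with h | h
    · exact h
    · exact absurd h hpk
  · exact absurd h hpnk
def e (N k : ℕ) : ℕ := (k - N)^2 + (N - k)^2

lemma e_add_right (N m : ℕ) : e N (N + m) = m^2 := by
  simp [e, Nat.add_sub_cancel_left, Nat.sub_eq_zero_of_le (Nat.le_add_right N m)]

lemma e_add_left (k m : ℕ) : e (k + m) k = m^2 := by
  simp [e, Nat.add_sub_cancel_left, Nat.sub_eq_zero_of_le (Nat.le_add_right k m),
    Nat.add_sub_cancel]

lemma e_cast (N k : ℕ) : (e N k : ℤ) = ((k:ℤ) - (N:ℤ))^2 := by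
  rcases le_total N k with h | h
  · obtain ⟨m, rfl⟩ := Nat.exists_eq_add_of_le h
    rw [e_add_right]; push_cast; ring
  · obtain ⟨m, rfl⟩ := Nat.exists_eq_add_of_le h
    rw [e_add_left]; push_cast; ring

def a (N k : ℕ) : R := gb (2*N) k * Q^(e N k)

lemma a_of_gt {N k : ℕ} (h : 2*N < k) : a N k = 0 := by
  rw [a, gb_of_lt h, zero_mul]

lemma K0 (N : ℕ) : a (N+1) 0 = Q^(2*N+1) * a N 0 := by
  have h1 : e (N+1) 0 = (N+1)^2 := by simpa using e_add_left 0 (N+1)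
  have h2 : e N 0 = N^2 := by simpa using e_add_left 0 N
  rw [a, a, gb_zero, gb_zero, one_mul, one_mul, ← pow_add, h1, h2]
  congr 1
  ring

lemma K1 (N : ℕ) : a (N+1) 1 = Q^(2*N+1) * a N 1 + (1 + Q^(2*(2*N+1))) * a N 0 := by
  match N with
  | 0 =>
    show a 1 1 = _
    rw [a, a, a]
    have h1 : e 1 1 = 0 := by simp [e]
    have h2 : e 0 1 = 1 := by simp [e]
    have h3 : e 0 0 = 0 := by simp [e]
    rw [h1, h2, h3, gb_one, gb_one, gb_zero]
    simp [Finset.sum_range_succ]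
  | M+1 =>
    rw [a, a, a, gb_one, gb_one, gb_zero]
    have h1 : e (M+2) 1 = (M+1)^2 := by
      have := e_add_left 1 (M+1); rwa [show 1+(M+1) = M+2 by ring] at this
    have h2 : e (M+1) 1 = M^2 := by
      have := e_add_left 1 M; rwa [show 1+M = M+1 by ring] at this
    have h3 : e (M+1) 0 = (M+1)^2 := by simpa using e_add_left 0 (M+1)
    rw [h1, h2, h3]
    rw [show 2*(M+2) = (2*M+3)+1 by ring, Finset.sum_range_succ,
      show 2*M+3 = (2*M+2)+1 by ring, Finset.sum_range_succ']
    rw [add_mul, add_mul, Finset.sum_mul, Finset.sum_mul, Finset.mul_sum]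
    have hs : ∀ i ∈ range (2*M+2), Q^(2*(i+1)) * Q^((M+1)^2)
        = Q^(2*(M+1)+1) * (Q^(2*i) * Q^(M^2)) := by
      intro i _
      rw [← pow_add, ← pow_add, ← pow_add]
      congr 1
      ring
    rw [Finset.sum_congr rfl hs, show 2*(M+1) = 2*M+2 by ring]
    rw [← pow_add, ← pow_add]
    rw [show 2*((2*M+2)+1) + (M+1)^2 = (M+1)^2 + 2*(2*(M+1)+1) by ring]
    ring

lemma K2 (N j : ℕ) : a (N+1) (j+2) = Q^(2*N+1) * a N (j+2) + (1 + Q^(2*(2*N+1))) * a N (j+1)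
    + Q^(2*N+1) * a N j := by
  rcases Nat.lt_or_ge (j+1) (2*N+1) with hj | hj
  · -- main case : j + 1 ≤ 2*N
    have hj' : j + 1 ≤ 2*N := by omega
    have hE : e (N+1) (j+2) = e N (j+1) := by
      simp only [e]
      rw [show j+2 - (N+1) = j+1-N by omega, show (N+1) - (j+2) = N - (j+1) by omega]
    have h1 : 2*(2*N-j) + e (N+1) (j+2) = (2*N+1) + e N j := by
      zify [show j ≤ 2*N from by omega]
      simp only [e_cast]
      push_cast
      ring
    have h3 : 2*(j+2) + e (N+1) (j+2) = (2*N+1) + e N (j+2) := by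
      zify
      simp only [e_cast]
      push_cast
      ring
    have p1 : Q^(2*(2*N-j)) * Q^(e (N+1) (j+2)) = Q^(2*N+1) * Q^(e N j) := by
      rw [← pow_add, ← pow_add, h1]
    have p2 : Q^(e (N+1) (j+2)) = Q^(e N (j+1)) := by rw [hE]
    have p3 : Q^(2*(j+2)) * Q^(e (N+1) (j+2)) = Q^(2*N+1) * Q^(e N (j+2)) := by
      rw [← pow_add, ← pow_add, h3]
    rw [a, a, a, a, show 2*(N+1) = 2*N+2 by ring, gb_step (2*N) j hj']
    linear_combination gb (2*N) j * p1 + (1 + Q^(2*(2*N+1))) * gb (2*N) (j+1) * p2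
      + gb (2*N) (j+2) * p3
  · rcases Nat.lt_or_ge (2*N+1) (j+1) with hj2 | hj2
    · -- j ≥ 2N+1 : everything vanishes
      rw [a_of_gt (by omega), a_of_gt (by omega), a_of_gt (by omega),
        a_of_gt (by omega)]
      ring
    · -- j = 2N
      have : j = 2*N := by omega
      subst this
      have hL : a (N+1) (2*N+2) = Q^((N+1)^2) := by
        rw [a, show 2*(N+1) = 2*N+2 by ring, gb_self, one_mul]
        congr 1
        have := e_add_right (N+1) (N+1); rwa [show N+1+(N+1) = 2*N+2 by ring] at this
      have hA : a N (2*N) = Q^(N^2) := by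
        rw [a, gb_self, one_mul]
        congr 1
        have := e_add_right N N; rwa [show N+N = 2*N by ring] at this
      rw [hL, hA, a_of_gt (show 2*N < 2*N+2 by omega), a_of_gt (show 2*N < 2*N+1 by omega)]
      simp only [mul_zero, zero_add, add_zero]
      rw [← pow_add]
      congr 1
      ring
lemma coeff_sum_CX (f : ℕ → R) (B m : ℕ) :
    (∑ k ∈ range B, Polynomial.C (f k) * Polynomial.X ^ k).coeff m
      = if m < B then f m else 0 := by
  rw [Polynomial.finset_sum_coeff]
  simp only [Polynomial.coeff_C_mul, Polynomial.coeff_X_pow, mul_ite, mul_one, mul_zero]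
  rw [Finset.sum_ite_eq (range B) m f]
  simp [Finset.mem_range]

lemma a_if (N m B : ℕ) (hB : 2*N + 1 ≤ B) : (if m < B then a N m else 0) = a N m := by
  split
  · rfl
  · exact (a_of_gt (by omega)).symm

lemma jtp : ∀ N : ℕ,
    ∏ j ∈ range N, ((1 + Polynomial.C (Q^(2*j+1)) * Polynomial.X)
        * (Polynomial.C (Q^(2*j+1)) + Polynomial.X))
      = ∑ k ∈ range (2*N+1), Polynomial.C (a N k) * Polynomial.X ^ k := by
  intro N
  induction N with
  | zero =>
    simp [a, e]
  | succ N ih =>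
    rw [Finset.prod_range_succ, ih]
    set q : R := Q^(2*N+1) with hq
    have hG : ∀ u : R, (1 + Polynomial.C u * Polynomial.X) * (Polynomial.C u + Polynomial.X)
        = Polynomial.C u + Polynomial.C (1 + u^2) * Polynomial.X
          + Polynomial.C u * Polynomial.X ^ 2 := by
      intro u
      rw [Polynomial.C_add, Polynomial.C_1, Polynomial.C_pow]
      ring
    rw [hG q]
    set S : Polynomial R := ∑ k ∈ range (2*N+1), Polynomial.C (a N k) * Polynomial.X ^ k
      with hS
    have hexp : S * (Polynomial.C q + Polynomial.C (1 + q^2) * Polynomial.X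
        + Polynomial.C q * Polynomial.X ^ 2)
        = Polynomial.C q * S + Polynomial.C (1 + q^2) * (S * Polynomial.X ^ 1)
          + Polynomial.C q * (S * Polynomial.X ^ 2) := by
      ring
    rw [hexp]
    ext m
    rw [Polynomial.coeff_add, Polynomial.coeff_add, Polynomial.coeff_C_mul,
      Polynomial.coeff_C_mul, Polynomial.coeff_C_mul, Polynomial.coeff_mul_X_pow',
      Polynomial.coeff_mul_X_pow', hS, coeff_sum_CX, coeff_sum_CX, coeff_sum_CX,
      coeff_sum_CX]
    rw [a_if N m _ (le_refl _)]
    have hq2 : (1 : R) + q^2 = 1 + Q^(2*(2*N+1)) := by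
      rw [hq, ← pow_mul]
      ring_nf
    match m with
    | 0 =>
      simp only [show ¬(1 ≤ 0) by omega, if_false, show ¬(2 ≤ 0) by omega,
        show (0:ℕ) < 2*(N+1)+1 by omega, if_true, mul_zero, add_zero]
      rw [K0 N, hq]
    | 1 =>
      simp only [show (1:ℕ) ≤ 1 by omega, if_true, show ¬(2 ≤ 1) by omega, if_false,
        show (1:ℕ) < 2*(N+1)+1 by omega, mul_zero, add_zero]
      rw [a_if N 0 _ (by omega), K1 N, hq2, hq]
    | j+2 =>
      simp only [show (1:ℕ) ≤ j+2 by omega, if_true, show (2:ℕ) ≤ j+2 by omega,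
        show j+2-1 = j+1 by omega, show j+2-2 = j by omega]
      rw [a_if N (j+1) _ (by omega), a_if N j _ (by omega)]
      by_cases hm : j + 2 < 2*(N+1)+1
      · rw [if_pos hm, K2 N j, hq2, hq]
      · rw [if_neg hm, a_of_gt (show 2*N < j+2 by omega), a_of_gt (show 2*N < j+1 by omega),
          a_of_gt (show 2*N < j by omega)]
        ring
lemma jtp_eval (N : ℕ) :
    ∏ j ∈ range N, ((1 + Q^(2*j+1) * Q) * (Q^(2*j+1) + Q))
      = ∑ k ∈ range (2*N+1), a N k * Q^k := by
  have h := congrArg (Polynomial.eval Q) (jtp N)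
  simpa only [Polynomial.eval_prod, Polynomial.eval_finset_sum, Polynomial.eval_mul,
    Polynomial.eval_add, Polynomial.eval_one, Polynomial.eval_C, Polynomial.eval_X,
    Polynomial.eval_pow] using h

lemma dvd_prod_sub_one {ι : Type*} (s : Finset ι) (f : ι → R) (D : R)
    (h : ∀ i ∈ s, D ∣ f i - 1) : D ∣ (∏ i ∈ s, f i) - 1 := by
  classical
  induction s using Finset.induction_on with
  | empty => simp
  | @insert x s' hx ih =>
    rw [Finset.prod_insert hx]
    have key : f x * ∏ i ∈ s', f i - 1
        = f x * ((∏ i ∈ s', f i) - 1) + (f x - 1) := by ring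
    exact key ▸ dvd_add ((ih (fun i hi => h i (Finset.mem_insert_of_mem hi))).mul_left _)
      (h x (Finset.mem_insert_self x s'))

lemma key_dvd (d m : ℕ) (hm : m ≤ d) :
    (PowerSeries.X : R)^(2*(d-m)+2) ∣ pq d * gb (2*d) (d+m) - 1 := by
  have hgb := gb_mul_pq (2*d) (d+m) (by omega)
  rw [show 2*d - (d+m) = d - m by omega] at hgb
  have hpqdm : pq (d+m) = pq d * ∏ j ∈ range m, (1 - Q^(2*(d+j+1))) := by
    rw [pq, Finset.prod_range_add]
    rfl
  have hpq2d : pq (2*d) = pq (d-m) * ∏ j ∈ range (d+m), (1 - Q^(2*((d-m)+j+1))) := by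
    rw [pq, show 2*d = (d-m) + (d+m) by omega, Finset.prod_range_add]
    rfl
  set T : R := ∏ j ∈ range m, (1 - Q^(2*(d+j+1))) with hT
  set U : R := ∏ j ∈ range (d+m), (1 - Q^(2*((d-m)+j+1))) with hU
  have E : pq d * gb (2*d) (d+m) * T = U := by
    rw [hpqdm, hpq2d] at hgb
    have h2 : pq (d-m) * (pq d * gb (2*d) (d+m) * T) = pq (d-m) * U := by
      linear_combination hgb
    exact mul_left_cancel₀ (pq_ne_zero (d-m)) h2
  have hTd : (PowerSeries.X : R)^(2*d+2) ∣ T - 1 := by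
    apply dvd_prod_sub_one
    intro j _
    have : (1 : R) - Q^(2*(d+j+1)) - 1 = -(Q^(2*(d+j+1))) := by ring
    rw [this, dvd_neg]
    show (PowerSeries.X : R)^(2*d+2) ∣ PowerSeries.X^(2*(d+j+1))
    exact pow_dvd_pow _ (by omega)
  have hUd : (PowerSeries.X : R)^(2*(d-m)+2) ∣ U - 1 := by
    apply dvd_prod_sub_one
    intro j _
    have : (1 : R) - Q^(2*((d-m)+j+1)) - 1 = -(Q^(2*((d-m)+j+1))) := by ring
    rw [this, dvd_neg]
    show (PowerSeries.X : R)^(2*(d-m)+2) ∣ PowerSeries.X^(2*((d-m)+j+1))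
    exact pow_dvd_pow _ (by omega)
  have final : pq d * gb (2*d) (d+m) - 1
      = (U - 1) - (pq d * gb (2*d) (d+m)) * (T - 1) := by
    rw [← E]; ring
  rw [final]
  exact dvd_sub hUd (((pow_dvd_pow _ (by omega)).trans hTd).mul_left _)

lemma key_dvd' (d m : ℕ) (hm : m ≤ d) :
    (PowerSeries.X : R)^(2*(d-m)+2) ∣ pq d * gb (2*d) (d-m) - 1 := by
  have hsymm : gb (2*d) (d-m) = gb (2*d) (d+m) := by
    have := gb_symm (2*d) (d+m) (by omega)
    rw [show 2*d - (d+m) = d-m by omega] at this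
    exact this.symm
  rw [hsymm]
  exact key_dvd d m hm
def eps (d k : ℕ) : ℕ := (k-d)*(k-d+1) + (d-k)*(d-k-1)

lemma e_add_eps (d k : ℕ) : e d k + k = d + eps d k := by
  rcases le_total d k with h | h
  · obtain ⟨m, rfl⟩ := Nat.exists_eq_add_of_le h
    rw [e_add_right, eps, Nat.add_sub_cancel_left, Nat.sub_eq_zero_of_le (Nat.le_add_right d m)]
    ring
  · obtain ⟨m, rfl⟩ := Nat.exists_eq_add_of_le h
    rw [e_add_left, eps, Nat.add_sub_cancel_left, Nat.sub_eq_zero_of_le (Nat.le_add_right k m)]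
    match m with
    | 0 => ring
    | s+1 =>
      rw [Nat.add_sub_cancel]
      ring

lemma eps_right (d x : ℕ) : eps d (d+x) = x*(x+1) := by
  rw [eps, Nat.add_sub_cancel_left, Nat.sub_eq_zero_of_le (Nat.le_add_right d x)]
  ring

lemma eps_left (t j : ℕ) : eps (j+1+t) j = (t+1)*t := by
  rw [eps, Nat.sub_eq_zero_of_le (by omega), show j+1+t-j = t+1 by omega]
  simp

lemma sum_eps (d : ℕ) :
    ∑ k ∈ range (2*d+1), (Q^(eps d k) : R)
      = 2 * (∑ n ∈ range d, Q^(n^2+n)) + Q^(d^2+d) := by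
  rw [show 2*d+1 = d + (d+1) by ring, Finset.sum_range_add]
  have h1 : ∑ x ∈ range d, (Q^(eps d x) : R) = ∑ n ∈ range d, Q^(n^2+n) := by
    rw [← Finset.sum_range_reflect]
    apply Finset.sum_congr rfl
    intro j hj
    rw [Finset.mem_range] at hj
    have : eps d (d-1-j) = (j+1)*j := by
      have h := eps_left j (d-1-j)
      rwa [show d-1-j+1+j = d by omega] at h
    rw [this]
    congr 1
    ring
  have h2 : ∑ x ∈ range (d+1), (Q^(eps d (d+x)) : R)
      = (∑ n ∈ range d, Q^(n^2+n)) + Q^(d^2+d) := by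
    rw [Finset.sum_range_succ, eps_right]
    congr 1
    · apply Finset.sum_congr rfl
      intro x _
      rw [eps_right]
      congr 1
      ring
    · congr 1
      ring
  rw [h1, h2]
  ring

lemma perk_dvd (d k : ℕ) (hd : 1 ≤ d) (hk : k < 2*d+1) :
    (PowerSeries.X : R)^(2*d) ∣ pq d * (gb (2*d) k * Q^(e d k + k)) - Q^(e d k + k) := by
  have base : ∀ c : ℕ, 2*d ≤ e d k + k + c →
      ((PowerSeries.X : R)^c ∣ pq d * gb (2*d) k - 1) →
      (PowerSeries.X : R)^(2*d) ∣ pq d * (gb (2*d) k * Q^(e d k + k)) - Q^(e d k + k) := by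
    intro c hc hdvd
    have h1 : pq d * (gb (2*d) k * Q^(e d k + k)) - Q^(e d k + k)
        = (pq d * gb (2*d) k - 1) * Q^(e d k + k) := by ring
    rw [h1]
    have h2 : (PowerSeries.X : R)^(c + (e d k + k))
        ∣ (pq d * gb (2*d) k - 1) * Q^(e d k + k) := by
      rw [pow_add]
      exact mul_dvd_mul hdvd (dvd_refl _)
    exact dvd_trans (pow_dvd_pow _ (by omega)) h2
  rcases le_total d k with h | h
  · obtain ⟨m, rfl⟩ := Nat.exists_eq_add_of_le h
    have hm : m ≤ d := by omega
    apply base (2*(d-m)+2) ?_ (key_dvd d m hm)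
    rw [e_add_right]
    zify [hm]
    nlinarith [sq_nonneg ((m:ℤ) - 1)]
  · obtain ⟨m, rfl⟩ := Nat.exists_eq_add_of_le h
    have h2 := key_dvd' (k+m) m (by omega)
    rw [show k+m-m = k by omega] at h2
    apply base (2*k+2) ?_ h2
    rw [e_add_left]
    zify
    nlinarith [sq_nonneg ((m:ℤ) - 1)]
lemma main_dvd (d : ℕ) (hd : 1 ≤ d) :
    (PowerSeries.X : R)^d ∣
      ((∏ n ∈ range d, ((1 - Q^(4*(n+1))) * (1 + Q^(2*(n+1)))))
          + ∏ n ∈ range d, ((1 - Q^(4*(n+1))) * (1 + Q^(2*(n+1)))))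
        - ((∑ n ∈ range d, Q^(n^2+n)) + ∑ n ∈ range d, Q^(n^2+n)) := by
  obtain ⟨t, rfl⟩ : ∃ t, d = t + 1 := ⟨d - 1, by omega⟩
  set d := t + 1
  set P : R := ∏ n ∈ range d, ((1 - Q^(4*(n+1))) * (1 + Q^(2*(n+1)))) with hPdef
  set S : R := ∑ n ∈ range d, Q^(n^2+n) with hSdef
  set A : R := ∏ j ∈ range d, (1 + Q^(2*(j+1))) with hAdef
  set B : R := ∏ j ∈ range t, (1 + Q^(2*(j+1))) with hBdef
  have hP : P = pq d * (A * A) := by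
    rw [hPdef, hAdef, pq, ← Finset.prod_mul_distrib, ← Finset.prod_mul_distrib]
    apply Finset.prod_congr rfl
    intro n _
    have h4 : (Q:R)^(4*(n+1)) = Q^(2*(n+1)) * Q^(2*(n+1)) := by
      rw [← pow_add]; congr 1; ring
    rw [h4]; ring
  have hA : A = B * (1 + Q^(2*d)) := by
    rw [hAdef, hBdef, Finset.prod_range_succ]
  have h0 : ∏ j ∈ range d, ((1:R) + Q^(2*j)) = 2 * B := by
    rw [Finset.prod_range_succ', hBdef]
    norm_num [mul_comm]
  have hLHS1 : ∏ j ∈ range d, (((1:R) + Q^(2*j+1) * Q) * (Q^(2*j+1) + Q))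
      = Q^d * A * ∏ j ∈ range d, ((1:R) + Q^(2*j)) := by
    rw [Finset.prod_mul_distrib]
    have e1 : ∏ j ∈ range d, ((1:R) + Q^(2*j+1) * Q) = A := by
      rw [hAdef]
      apply Finset.prod_congr rfl
      intro j _
      rw [← pow_succ]
      congr 2
      try ring
    have e2 : ∏ j ∈ range d, ((Q:R)^(2*j+1) + Q) = Q^d * ∏ j ∈ range d, ((1:R) + Q^(2*j)) := by
      have hper : ∀ j ∈ range d, ((Q:R)^(2*j+1) + Q) = Q * (1 + Q^(2*j)) := by
        intro j _
        rw [pow_succ]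
        ring
      rw [Finset.prod_congr rfl hper, Finset.prod_mul_distrib, Finset.prod_const,
        Finset.card_range]
    rw [e1, e2]
    ring
  have hsum : ∑ k ∈ range (2*d+1), a d k * Q^k
      = ∑ k ∈ range (2*d+1), gb (2*d) k * Q^(e d k + k) := by
    apply Finset.sum_congr rfl
    intro k _
    rw [a, pow_add]
    ring
  have hjtp := jtp_eval d
  rw [hsum] at hjtp
  have EX : Q^d * (P + P)
      = (1 + Q^(2*d)) * ∑ k ∈ range (2*d+1), pq d * (gb (2*d) k * Q^(e d k + k)) := by
    rw [← Finset.mul_sum, ← hjtp, hLHS1, h0]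
    rw [hP, hA]
    ring
  set Spq : R := ∑ k ∈ range (2*d+1), pq d * (gb (2*d) k * Q^(e d k + k)) with hSpq
  set Spl : R := ∑ k ∈ range (2*d+1), Q^(e d k + k) with hSpl
  have D1 : (PowerSeries.X : R)^(2*d) ∣ Spq - Spl := by
    rw [hSpq, hSpl, ← Finset.sum_sub_distrib]
    apply Finset.dvd_sum
    intro k hk
    exact perk_dvd d k (by omega) (Finset.mem_range.mp hk)
  have D2 : Spl = Q^d * (2 * S + Q^(d^2+d)) := by
    rw [hSpl]
    have hper : ∀ k ∈ range (2*d+1), (Q:R)^(e d k + k) = Q^d * Q^(eps d k) := by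
      intro k _
      rw [e_add_eps, pow_add]
    rw [Finset.sum_congr rfl hper, ← Finset.mul_sum, sum_eps, hSdef]
  have decomp : Q^d * (P + P) - Q^d * (S + S)
      = (1 + Q^(2*d)) * (Spq - Spl) + Q^(d^2+d) * Q^d
        + Q^(2*d) * (Q^d * (2 * S + Q^(d^2+d))) := by
    rw [EX, D2]
    ring
  have hdvd2d : (PowerSeries.X : R)^(2*d) ∣ Q^d * (P + P) - Q^d * (S + S) := by
    rw [decomp]
    apply dvd_add
    apply dvd_add
    · exact (D1.mul_left _)
    · show (PowerSeries.X : R)^(2*d) ∣ PowerSeries.X^(d^2+d) * PowerSeries.X^d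
      rw [← pow_add]
      exact pow_dvd_pow _ (by nlinarith)
    · exact Dvd.intro _ rfl
  have hfact : Q^d * (P + P) - Q^d * (S + S) = Q^d * ((P + P) - (S + S)) := by ring
  rw [hfact, show 2*d = d + d by ring, pow_add] at hdvd2d
  exact (mul_dvd_mul_iff_left (pow_ne_zero d (PowerSeries.X_ne_zero : (PowerSeries.X : R) ≠ 0))).mp hdvd2d

end JTPaux

end

/-- Jacobi triple product specialized at `z = q`:
`∏_{n=1}^∞ (1 - q^{4n})(1 + q^{2n}) = ∑_{n=0}^∞ q^{n²+n}` in `ℤ[[q]]`.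
The infinite product and sum are interpreted formally: the `n`-th factor is
`1 + O(q^{2n})`, so all coefficients below degree `d` are determined by the
partial product/sum over indices `< d`. -/
theorem jacobi_triple_product_z_eq_q :
    ∀ d : ℕ,
      PowerSeries.trunc d
        (∏ n ∈ Finset.range d,
          ((1 - PowerSeries.X ^ (4 * (n + 1))) * (1 + PowerSeries.X ^ (2 * (n + 1))) :
            PowerSeries ℤ)) =
      PowerSeries.trunc d
        (∑ n ∈ Finset.range d, (PowerSeries.X ^ (n ^ 2 + n) : PowerSeries ℤ)) := by

  intro d
  have hco : ∀ i, i < d →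
      (PowerSeries.coeff i) (∏ n ∈ Finset.range d,
          ((1 - PowerSeries.X ^ (4 * (n + 1))) * (1 + PowerSeries.X ^ (2 * (n + 1))) :
            PowerSeries ℤ))
        = (PowerSeries.coeff i)
            (∑ n ∈ Finset.range d, (PowerSeries.X ^ (n ^ 2 + n) : PowerSeries ℤ)) := by
    intro i hi
    have hd : 1 ≤ d := by omega
    have hdvd := JTPaux.main_dvd d hd
    rw [PowerSeries.X_pow_dvd_iff] at hdvd
    have h := hdvd i hi
    rw [map_sub, map_add, map_add] at h
    have hQ : JTPaux.Q = (PowerSeries.X : PowerSeries ℤ) := rfl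
    rw [hQ] at h
    linarith [h]
  ext n
  rw [PowerSeries.coeff_trunc, PowerSeries.coeff_trunc]
  split_ifs with h
  · exact hco n h
  · rfl
end

section
/- As an identity of formal power series in ℤ[[q]], ∏_{k=1}^{∞} (1 - q^{4k}) = (∑_{p=0}^{∞} q^{p(p+1)}) · ∏_{k=1}^{∞} (1 - q^{4k-2}). -/
namespace AbeAux
open PowerSeries Finset

noncomputable abbrev XX : PowerSeries ℤ := PowerSeries.X

/-- congruence mod X^d -/
def md (d : ℕ) (f g : PowerSeries ℤ) : Prop := XX ^ d ∣ (f - g)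

lemma md_refl (d : ℕ) (f : PowerSeries ℤ) : md d f f := by simp [md]

lemma md_symm {d f g} (h : md d f g) : md d g f := by
  have := h.neg_right
  rw [md, show g - f = -(f - g) by ring]
  exact this

lemma md_trans {d f g h} (h1 : md d f g) (h2 : md d g h) : md d f h := by
  have := dvd_add h1 h2
  simpa [md, show f - g + (g - h) = f - h by ring] using this

lemma md_add {d a b c e} (h1 : md d a b) (h2 : md d c e) : md d (a + c) (b + e) := by
  have := dvd_add h1 h2
  simpa [md, show a - b + (c - e) = a + c - (b + e) by ring] using this

lemma md_mul {d a b c e} (h1 : md d a b) (h2 : md d c e) : md d (a * c) (b * e) := by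
  have := dvd_add (h1.mul_right c) (h2.mul_left b)
  simpa [md, show (a - b) * c + b * (c - e) = a * c - b * e by ring] using this

lemma md_mul_left {d a c e} (h2 : md d c e) : md d (a * c) (a * e) := md_mul (md_refl d a) h2

lemma md_of_le {d e f g} (h : md d f g) (hle : e ≤ d) : md e f g :=
  dvd_trans (pow_dvd_pow _ hle) h

lemma md_of_eq {d f g} (h : f = g) : md d f g := by simp [md, h]

lemma md_sum {d : ℕ} {s : Finset ℕ} {f g : ℕ → PowerSeries ℤ}
    (h : ∀ m ∈ s, md d (f m) (g m)) : md d (∑ m ∈ s, f m) (∑ m ∈ s, g m) := by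
  classical
  induction s using Finset.cons_induction with
  | empty => simp [md_refl]
  | cons a s ha ih =>
    simp only [Finset.sum_cons]
    exact md_add (h a (Finset.mem_cons_self a s)) (ih fun m hm => h m (Finset.mem_cons.mpr (Or.inr hm)))

lemma md_pow_zero {d e : ℕ} (h : d ≤ e) : md d (XX ^ e) 0 := by
  simpa [md] using pow_dvd_pow XX h

lemma md_prod_one {d : ℕ} {s : Finset ℕ} {f : ℕ → PowerSeries ℤ}
    (h : ∀ m ∈ s, md d (f m) 1) : md d (∏ m ∈ s, f m) 1 := by
  classical
  induction s using Finset.cons_induction with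
  | empty => simp [md_refl]
  | cons a s ha ih =>
    simp only [Finset.prod_cons]
    have := md_mul (h a (Finset.mem_cons_self a s)) (ih fun m hm => h m (Finset.mem_cons.mpr (Or.inr hm)))
    simpa using this

lemma md_cancel_unit {d : ℕ} {u a b : PowerSeries ℤ} (hu : IsUnit u) (h : md d (u * a) (u * b)) :
    md d a b := by
  rcases isUnit_iff_exists_inv.mp hu with ⟨v, hv⟩
  have h2 : XX ^ d ∣ (u * a - u * b) * v := h.mul_right v
  have : (u * a - u * b) * v = a - b := by
    have : (u * a - u * b) * v = (a - b) * (u * v) := by ring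
    rw [this, hv, mul_one]
  rwa [md, ← this]

lemma md_cancel_Xpow {a e : ℕ} {u v : PowerSeries ℤ}
    (h : md (a + e) (XX ^ a * u) (XX ^ a * v)) : md e u v := by
  have hX : (XX : PowerSeries ℤ) ^ a ≠ 0 := pow_ne_zero _ PowerSeries.X_ne_zero
  have : XX ^ a * XX ^ e ∣ XX ^ a * (u - v) := by
    rw [← pow_add]
    simpa [md, mul_sub] using h
  exact (mul_dvd_mul_iff_left hX).mp this

lemma md_cancel_two {d : ℕ} {a b : PowerSeries ℤ} (h : md d (2 * a) (2 * b)) : md d a b := by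
  rw [md, PowerSeries.X_pow_dvd_iff] at h ⊢
  intro m hm
  have := h m hm
  simp only [map_sub] at this ⊢
  have hC : (2 : PowerSeries ℤ) = PowerSeries.C 2 := by simp
  rw [hC] at this
  rw [PowerSeries.coeff_C_mul, PowerSeries.coeff_C_mul] at this
  omega


lemma md_trunc {d : ℕ} {f g : PowerSeries ℤ} (h : md d f g) :
    PowerSeries.trunc d f = PowerSeries.trunc d g := by
  rw [md, PowerSeries.X_pow_dvd_iff] at h
  ext m
  rw [PowerSeries.coeff_trunc, PowerSeries.coeff_trunc]
  by_cases hm : m < d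
  · have := h m hm
    rw [map_sub] at this
    simp [hm]
    omega
  · simp [hm]

/-- `Pr m = ∏_{k<m} (1 - X^{2k+2})` -/
noncomputable def Pr (m : ℕ) : PowerSeries ℤ := ∏ k ∈ Finset.range m, (1 - XX ^ (2*k+2))

lemma Pr_succ (m : ℕ) : Pr (m+1) = Pr m * (1 - XX ^ (2*m+2)) := Finset.prod_range_succ _ m

lemma Pr_zero : Pr 0 = 1 := rfl

lemma Pr_add (a t : ℕ) : Pr (a + t) = Pr a * ∏ k ∈ Finset.range t, (1 - XX ^ (2*(a+k)+2)) := by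
  rw [Pr, Finset.prod_range_add]; rfl

lemma constantCoeff_Pr (m : ℕ) : PowerSeries.constantCoeff (Pr m) = 1 := by
  rw [Pr, map_prod]
  apply Finset.prod_eq_one
  intro k _
  rw [map_sub, map_pow]
  simp

lemma isUnit_Pr (m : ℕ) : IsUnit (Pr m) := by
  rw [PowerSeries.isUnit_iff_constantCoeff, constantCoeff_Pr]
  exact isUnit_one

/-- md: product extension is ≡ 1 -/
lemma md_ext_one (a t : ℕ) : md (2*a+2) (∏ k ∈ Finset.range t, (1 - XX ^ (2*(a+k)+2))) 1 := by
  apply md_prod_one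
  intro k _
  rw [md]
  have : (1:PowerSeries ℤ) - XX ^ (2*(a+k)+2) - 1 = -(XX ^ (2*(a+k)+2)) := by ring
  rw [this]
  apply Dvd.dvd.neg_right
  exact pow_dvd_pow _ (by omega)

/-- The coefficients of `∏_{k=1}^n (1+zX^{2k-1})(z+X^{2k-1})` as polynomials in `z`. -/
noncomputable def L : ℕ → ℕ → PowerSeries ℤ
  | 0, 0 => 1
  | 0, _+1 => 0
  | n+1, 0 => XX^(2*n+1) * L n 0
  | n+1, 1 => XX^(2*n+1) * L n 1 + (1 + XX^(4*n+2)) * L n 0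
  | n+1, (m+2) => XX^(2*n+1) * (L n (m+2) + L n m) + (1 + XX^(4*n+2)) * L n (m+1)

lemma L_eq_zero : ∀ n m, 2*n < m → L n m = 0 := by
  intro n
  induction n with
  | zero => intro m hm; match m, hm with
            | (k+1), _ => rfl
  | succ n ih =>
    intro m hm
    match m, hm with
    | (m+2), hm =>
      have h1 : L n (m+2) = 0 := ih _ (by omega)
      have h2 : L n m = 0 := ih _ (by omega)
      have h3 : L n (m+1) = 0 := ih _ (by omega)
      show XX^(2*n+1) * (L n (m+2) + L n m) + (1 + XX^(4*n+2)) * L n (m+1) = 0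
      rw [h1, h2, h3]; ring


lemma L_succ_zero (n : ℕ) : L (n+1) 0 = XX^(2*n+1) * L n 0 := rfl
lemma L_succ_one (n : ℕ) : L (n+1) 1 = XX^(2*n+1) * L n 1 + (1 + XX^(4*n+2)) * L n 0 := rfl
lemma L_succ_two (n m : ℕ) : L (n+1) (m+2)
    = XX^(2*n+1) * (L n (m+2) + L n m) + (1 + XX^(4*n+2)) * L n (m+1) := rfl
lemma L_zero_zero : L 0 0 = 1 := rfl


lemma Pr_step {a b e : ℕ} (hab : a = b + 1) (he : e = 2*b+2) : Pr a = Pr b * (1 - XX^e) := by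
  subst hab; subst he; exact Pr_succ b

lemma PF : ∀ n i j, i + j = n →
    L n (i+2*j) * (Pr (i+2*j) * Pr i) = XX^(j*j) * Pr (2*n) ∧
    L n i * (Pr (i+2*j) * Pr i) = XX^(j*j) * Pr (2*n) := by
  intro n
  induction n with
  | zero =>
    intro i j hij
    obtain rfl : i = 0 := by omega
    obtain rfl : j = 0 := by omega
    refine ⟨?_, ?_⟩ <;>
      simp [L_zero_zero, Pr_zero]
  | succ n ih =>
    intro i j hij
    rcases j with _ | jj
    · -- j = 0, i = n+1
      obtain rfl : i = n + 1 := by omega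
      have key : L (n+1) (n+1) * (Pr (n+1) * Pr (n+1)) = XX^(0*0) * Pr (2*(n+1)) := by
        rcases n with _ | k
        · -- n = 0
          have h1 : L 1 1 = 1 + XX^2 := by
            rw [L_succ_one, show L 0 1 = (0 : PowerSeries ℤ) from rfl, L_zero_zero]
            ring
          have e2 : Pr 2 = Pr 1 * (1 - XX^4) := Pr_step (by omega) (by omega)
          have e1 : Pr 1 = Pr 0 * (1 - XX^2) := Pr_step (by omega) (by omega)
          rw [h1, show 2*(0+1) = 2 by omega, e2, e1, Pr_zero]
          ring
        · -- n = k+1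
          obtain ⟨hA, hB⟩ := ih k 1 (by omega)
          rw [show k+2*1 = k+2 by omega] at hA hB
          obtain ⟨hC, _⟩ := ih (k+1) 0 (by omega)
          rw [show k+1+2*0 = k+1 by omega] at hC
          have hL : L (k+1+1) (k+1+1) = XX^(2*(k+1)+1) * (L (k+1) (k+2) + L (k+1) k)
              + (1 + XX^(4*(k+1)+2)) * L (k+1) (k+1) := by
            have h := L_succ_two (k+1) k
            rwa [show k+2 = k+1+1 by omega] at h
          have eP1 : Pr (k+1) = Pr k * (1 - XX^(2*k+2)) := Pr_step (by omega) (by omega)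
          have eP2 : Pr (k+2) = Pr (k+1) * (1 - XX^(2*k+4)) := Pr_step (by omega) (by omega)
          have eR1 : Pr (2*(k+1)+1) = Pr (2*(k+1)) * (1 - XX^(4*k+6)) := Pr_step (by omega) (by omega)
          have eR2 : Pr (2*(k+2)) = Pr (2*(k+1)+1) * (1 - XX^(4*k+8)) := Pr_step (by omega) (by omega)
          rw [hL, show k+1+1 = k+2 by omega, eR2, eR1, eP2, eP1]
          rw [eP1] at hC
          rw [eP2, eP1] at hA hB
          linear_combination (XX^(2*k+3) * ((1-XX^(2*k+2))*(1-XX^(2*k+4)))) * hA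
            + (XX^(2*k+3) * ((1-XX^(2*k+2))*(1-XX^(2*k+4)))) * hB
            + ((1+XX^(4*k+6)) * ((1-XX^(2*k+4))*(1-XX^(2*k+4)))) * hC
      constructor
      · have h := key
        rwa [show n+1+2*0 = n+1 by omega]
      · have h := key
        rwa [show n+1+2*0 = n+1 by omega]
    · -- j = jj+1
      rcases i with _ | _ | i0
      · -- i = 0, n = jj
        obtain rfl : jj = n := by omega
        obtain ⟨hA, hB⟩ := ih 0 jj (by omega)
        rw [show 0+2*jj = 2*jj by omega] at hA hB
        have hz1 : L jj (2*jj+2) = 0 := L_eq_zero _ _ (by omega)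
        have hz2 : L jj (2*jj+1) = 0 := L_eq_zero _ _ (by omega)
        have hL : L (jj+1) (2*jj+2) = XX^(2*jj+1) * (L jj (2*jj+2) + L jj (2*jj))
            + (1 + XX^(4*jj+2)) * L jj (2*jj+1) := L_succ_two jj (2*jj)
        have t1 : Pr (2*jj+1) = Pr (2*jj) * (1 - XX^(4*jj+2)) := Pr_step (by omega) (by omega)
        have t2 : Pr (2*jj+2) = Pr (2*jj+1) * (1 - XX^(4*jj+4)) := Pr_step (by omega) (by omega)
        constructor
        · rw [show 0+2*(jj+1) = 2*jj+2 by omega, show 2*(jj+1) = 2*jj+2 by omega,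
            hL, hz1, hz2, t2, t1]
          linear_combination (XX^(2*jj+1) * ((1-XX^(4*jj+2))*(1-XX^(4*jj+4)))) * hA
        · rw [show 0+2*(jj+1) = 2*jj+2 by omega, show 2*(jj+1) = 2*jj+2 by omega,
            L_succ_zero, t2, t1]
          linear_combination (XX^(2*jj+1) * ((1-XX^(4*jj+2))*(1-XX^(4*jj+4)))) * hB
      · -- i = 1, n = jj+1
        obtain rfl : n = jj+1 := by omega
        obtain ⟨hA1, hB1⟩ := ih 1 jj (by omega)
        rw [show 1+2*jj = 2*jj+1 by omega, show 2*(jj+1) = 2*jj+2 by omega] at hA1 hB1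
        obtain ⟨hA2, hB2⟩ := ih 0 (jj+1) (by omega)
        rw [show 0+2*(jj+1) = 2*jj+2 by omega, show 2*(jj+1) = 2*jj+2 by omega] at hA2 hB2
        have e1 : Pr 1 = Pr 0 * (1 - XX^2) := Pr_step (by omega) (by omega)
        have eB2 : Pr (2*jj+2) = Pr (2*jj+1) * (1 - XX^(4*jj+4)) := Pr_step (by omega) (by omega)
        have eB3 : Pr (2*jj+3) = Pr (2*jj+2) * (1 - XX^(4*jj+6)) := Pr_step (by omega) (by omega)
        have eB4 : Pr (2*jj+4) = Pr (2*jj+3) * (1 - XX^(4*jj+8)) := Pr_step (by omega) (by omega)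
        rw [eB2] at hA1 hB1 hA2 hB2
        rw [e1] at hA1 hB1
        constructor
        · have hz : L (jj+1) (2*jj+3) = 0 := L_eq_zero _ _ (by omega)
          have hL : L (jj+1+1) (2*jj+3) = XX^(2*(jj+1)+1) * (L (jj+1) (2*jj+3) + L (jj+1) (2*jj+1))
              + (1 + XX^(4*(jj+1)+2)) * L (jj+1) (2*jj+2) := by
            have h := L_succ_two (jj+1) (2*jj+1)
            rwa [show 2*jj+1+2 = 2*jj+3 by omega] at h
          rw [show 1+2*(jj+1) = 2*jj+3 by omega, show 2*(jj+1+1) = 2*jj+4 by omega,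
            hL, hz, eB4, eB3, eB2, e1]
          linear_combination (XX^(2*jj+3) * ((1-XX^(4*jj+4))*(1-XX^(4*jj+6)))) * hA1
            + ((1+XX^(4*jj+6)) * ((1-XX^(4*jj+6))*(1-XX^2))) * hA2
        · rw [show 1+2*(jj+1) = 2*jj+3 by omega, show 2*(jj+1+1) = 2*jj+4 by omega,
            L_succ_one, eB4, eB3, eB2, e1]
          linear_combination (XX^(2*jj+3) * ((1-XX^(4*jj+4))*(1-XX^(4*jj+6)))) * hB1
            + ((1+XX^(4*jj+6)) * ((1-XX^(4*jj+6))*(1-XX^2))) * hB2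
      · -- i = i0+2, generic
        rw [show i0+1+1 = i0+2 by omega] at hij ⊢
        obtain rfl : n = i0+jj+2 := by omega
        obtain ⟨hA1, hB2⟩ := ih i0 (jj+2) (by omega)
        rw [show i0+2*(jj+2) = i0+2*jj+4 by omega, show 2*(i0+jj+2) = 2*i0+2*jj+4 by omega]
          at hA1 hB2
        obtain ⟨hA2, hB1⟩ := ih (i0+2) jj (by omega)
        rw [show i0+2+2*jj = i0+2*jj+2 by omega, show 2*(i0+jj+2) = 2*i0+2*jj+4 by omega]
          at hA2 hB1
        obtain ⟨hA3, hB3⟩ := ih (i0+1) (jj+1) (by omega)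
        rw [show i0+1+2*(jj+1) = i0+2*jj+3 by omega, show 2*(i0+jj+2) = 2*i0+2*jj+4 by omega]
          at hA3 hB3
        have eP1 : Pr (i0+1) = Pr i0 * (1 - XX^(2*i0+2)) := Pr_step (by omega) (by omega)
        have eP2 : Pr (i0+2) = Pr (i0+1) * (1 - XX^(2*i0+4)) := Pr_step (by omega) (by omega)
        have eQ1 : Pr (i0+2*jj+3) = Pr (i0+2*jj+2) * (1 - XX^(2*i0+4*jj+6)) :=
          Pr_step (by omega) (by omega)
        have eQ2 : Pr (i0+2*jj+4) = Pr (i0+2*jj+3) * (1 - XX^(2*i0+4*jj+8)) :=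
          Pr_step (by omega) (by omega)
        have eR1 : Pr (2*i0+2*jj+5) = Pr (2*i0+2*jj+4) * (1 - XX^(4*i0+4*jj+10)) :=
          Pr_step (by omega) (by omega)
        have eR2 : Pr (2*i0+2*jj+6) = Pr (2*i0+2*jj+5) * (1 - XX^(4*i0+4*jj+12)) :=
          Pr_step (by omega) (by omega)
        rw [eQ2, eQ1] at hA1 hB2
        rw [eP2, eP1] at hA2 hB1
        rw [eQ1, eP1] at hA3 hB3
        have hL := L_succ_two (i0+jj+2) (i0+2*jj+2)
        rw [show i0+2*jj+2+2 = i0+2*jj+4 by omega, show i0+2*jj+2+1 = i0+2*jj+3 by omega] at hL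
        have hL' := L_succ_two (i0+jj+2) i0
        rw [show i0+0+2 = i0+2 by omega, show i0+0+1 = i0+1 by omega] at hL'
        constructor
        · rw [show i0+2+2*(jj+1) = i0+2*jj+4 by omega, show 2*(i0+jj+2+1) = 2*i0+2*jj+6 by omega,
            hL, eR2, eR1, eQ2, eQ1, eP2, eP1]
          linear_combination
            (XX^(2*i0+2*jj+5) * ((1-XX^(2*i0+2))*(1-XX^(2*i0+4)))) * hA1
            + (XX^(2*i0+2*jj+5) * ((1-XX^(2*i0+4*jj+6))*(1-XX^(2*i0+4*jj+8)))) * hA2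
            + ((1+XX^(4*i0+4*jj+10)) * ((1-XX^(2*i0+4*jj+8))*(1-XX^(2*i0+4)))) * hA3
        · rw [show i0+2+2*(jj+1) = i0+2*jj+4 by omega, show 2*(i0+jj+2+1) = 2*i0+2*jj+6 by omega,
            hL', eR2, eR1, eQ2, eQ1, eP2, eP1]
          linear_combination
            (XX^(2*i0+2*jj+5) * ((1-XX^(2*i0+4*jj+6))*(1-XX^(2*i0+4*jj+8)))) * hB1
            + (XX^(2*i0+2*jj+5) * ((1-XX^(2*i0+2))*(1-XX^(2*i0+4)))) * hB2
            + ((1+XX^(4*i0+4*jj+10)) * ((1-XX^(2*i0+4*jj+8))*(1-XX^(2*i0+4)))) * hB3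


lemma key2 (f : ℕ → PowerSeries ℤ) (N : ℕ) :
    ∑ k ∈ Finset.range (N+2), f k = (∑ k ∈ Finset.range N, f (k+2)) + f 1 + f 0 := by
  rw [Finset.sum_range_succ' f (N+1), Finset.sum_range_succ' (fun k => f (k+1)) N]

lemma Esum : ∀ n : ℕ, (∑ m ∈ Finset.range (2*n+1), XX^m * L n m)
    = XX^n * ∏ k ∈ Finset.range n, ((1 + XX^(2*k+2)) * (1 + XX^(2*k))) := by
  intro n
  induction n with
  | zero => simp [L_zero_zero]
  | succ n ih =>
    have zx1 : L n (2*n+1) = 0 := L_eq_zero _ _ (by omega)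
    have zx2 : L n (2*n+1+1) = 0 := L_eq_zero _ _ (by omega)
    set f : ℕ → PowerSeries ℤ := fun m => XX^m * L n m with hf
    have hS2 : ∑ k ∈ Finset.range (2*n+1), f (k+2)
        = (∑ k ∈ Finset.range (2*n+1), f k) - f 1 - f 0 := by
      have h1 := key2 f (2*n+1)
      have h2 : ∑ k ∈ Finset.range (2*n+1+2), f k
          = (∑ k ∈ Finset.range (2*n+1), f k) + f (2*n+1) + f (2*n+1+1) := by
        rw [show 2*n+1+2 = (2*n+1+1)+1 by omega, Finset.sum_range_succ, Finset.sum_range_succ]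
      have hz1 : f (2*n+1) = 0 := by rw [hf]; simp [zx1]
      have hz2 : f (2*n+1+1) = 0 := by rw [hf]; simp [zx2]
      rw [hz1, hz2] at h2
      linear_combination h2 - h1
    have hS1 : ∑ k ∈ Finset.range (2*n+1), f (k+1)
        = (∑ k ∈ Finset.range (2*n+1), f k) - f 0 := by
      have h1 := Finset.sum_range_succ' f (2*n+1)
      have h2 := Finset.sum_range_succ f (2*n+1)
      have hz1 : f (2*n+1) = 0 := by rw [hf]; simp [zx1]
      rw [hz1] at h2
      linear_combination h2 - h1
    have expand : ∑ m ∈ Finset.range (2*(n+1)+1), XX^m * L (n+1) m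
        = (∑ k ∈ Finset.range (2*n+1), XX^(k+2) * L (n+1) (k+2))
          + XX^1 * L (n+1) 1 + XX^0 * L (n+1) 0 := by
      rw [show 2*(n+1)+1 = (2*n+1)+2 by omega]
      exact key2 (fun m => XX^m * L (n+1) m) (2*n+1)
    rw [expand]
    have expand2 : ∑ k ∈ Finset.range (2*n+1), XX^(k+2) * L (n+1) (k+2)
        = XX^(2*n+1) * (∑ k ∈ Finset.range (2*n+1), f (k+2))
          + XX^(2*n+3) * (∑ k ∈ Finset.range (2*n+1), f k)
          + ((1+XX^(4*n+2)) * XX) * (∑ k ∈ Finset.range (2*n+1), f (k+1)) := by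
      rw [Finset.mul_sum, Finset.mul_sum, Finset.mul_sum, ← Finset.sum_add_distrib,
        ← Finset.sum_add_distrib]
      refine Finset.sum_congr rfl (fun k _ => ?_)
      rw [L_succ_two, hf]
      simp only []
      ring
    rw [expand2, hS2, hS1, L_succ_one, L_succ_zero, ih]
    rw [Finset.prod_range_succ]
    have hf0 : f 0 = XX^0 * L n 0 := rfl
    have hf1 : f 1 = XX^1 * L n 1 := rfl
    rw [hf0, hf1]
    ring

lemma sqsum (n : ℕ) : (∑ m ∈ Finset.range (2*n+1), (XX)^(m + ((m-n)*(m-n) + (n-m)*(n-m))))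
    = XX^n * (2 * (∑ p ∈ Finset.range n, XX^(p*(p+1))) + XX^(n*(n+1))) := by
  rw [show 2*n+1 = n + (n+1) by omega, Finset.sum_range_add]
  have h1 : (∑ m ∈ Finset.range n, (XX)^(m + ((m-n)*(m-n) + (n-m)*(n-m))))
      = ∑ p ∈ Finset.range n, XX^n * XX^(p*(p+1)) := by
    rw [← Finset.sum_range_reflect]
    refine Finset.sum_congr rfl (fun p hp => ?_)
    have hp' : p < n := Finset.mem_range.mp hp
    rw [← pow_add]
    congr 1
    have e1 : n - 1 - p - n = 0 := by omega
    have e2 : n - (n - 1 - p) = p + 1 := by omega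
    rw [e1, e2]
    have : n - 1 - p + (0 * 0 + (p+1)*(p+1)) = n + (p * (p+1) + p + 1) - (p+1) := by ring_nf; omega
    omega
  have h2 : (∑ x ∈ Finset.range (n+1), (XX)^((n+x) + ((n+x-n)*(n+x-n) + (n-(n+x))*(n-(n+x)))))
      = (∑ p ∈ Finset.range n, XX^n * XX^(p*(p+1))) + XX^n * XX^(n*(n+1)) := by
    rw [Finset.sum_range_succ]
    congr 1
    · refine Finset.sum_congr rfl (fun p hp => ?_)
      rw [← pow_add]
      congr 1
      have e1 : n + p - n = p := by omega
      have e2 : n - (n+p) = 0 := by omega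
      rw [e1, e2]
      ring
    · rw [← pow_add]
      congr 1
      have e1 : n + n - n = n := by omega
      have e2 : n - (n+n) = 0 := by omega
      rw [e1, e2]
      ring
  rw [h1, h2, ← Finset.mul_sum]
  ring


lemma md_mul_pow {e m : ℕ} {a b : PowerSeries ℤ} (h : md e a b) :
    md (m+e) (XX^m * a) (XX^m * b) := by
  rw [md] at h ⊢
  rw [show XX^m * a - XX^m * b = XX^m * (a - b) by ring, pow_add]
  exact mul_dvd_mul dvd_rfl h

lemma central (n : ℕ) : L n n * (Pr n * Pr n) = Pr (2*n) := by
  have h := (PF n n 0 (by omega)).1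
  rw [show n+2*0 = n by omega, show (0*0 : ℕ) = 0 by omega, pow_zero, one_mul] at h
  exact h

lemma L_cong (n i j : ℕ) (hij : i + j = n) :
    md (j*j + (2*i+2)) (L n (i+2*j)) (XX^(j*j) * L n n) ∧
    md (j*j + (2*i+2)) (L n i) (XX^(j*j) * L n n) := by
  obtain ⟨hA, hB⟩ := PF n i j hij
  have hC := central n
  have hdvd : XX^(2*i+2) ∣ (Pr n * Pr n - Pr (i+2*j) * Pr i) := by
    have h1 : md (2*i+2) (∏ k ∈ Finset.range j, (1 - XX^(2*(i+k)+2))) 1 := md_ext_one i j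
    have h2 : md (2*i+2) (∏ k ∈ Finset.range (2*j), (1 - XX^(2*(i+k)+2))) 1 := md_ext_one i (2*j)
    have e1 : Pr n = Pr i * ∏ k ∈ Finset.range j, (1 - XX^(2*(i+k)+2)) := by
      rw [← hij]; exact Pr_add i j
    have e2 : Pr (i+2*j) = Pr i * ∏ k ∈ Finset.range (2*j), (1 - XX^(2*(i+k)+2)) := Pr_add i (2*j)
    have hTT : md (2*i+2) ((∏ k ∈ Finset.range j, (1 - XX^(2*(i+k)+2)))
        * (∏ k ∈ Finset.range j, (1 - XX^(2*(i+k)+2))))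
        (∏ k ∈ Finset.range (2*j), (1 - XX^(2*(i+k)+2))) := by
      refine md_trans ?_ (md_symm h2)
      have := md_mul h1 h1
      simpa using this
    have h3 : md (2*i+2) (Pr n * Pr n) (Pr (i+2*j) * Pr i) := by
      refine md_trans (md_of_eq (by rw [e1]; ring)) (md_trans (md_mul_left (a := Pr i * Pr i) hTT) (md_of_eq (by rw [e2]; ring)))
    exact h3
  have docase : ∀ Lv : PowerSeries ℤ, Lv * (Pr (i+2*j) * Pr i) = XX^(j*j) * Pr (2*n) →
      md (j*j + (2*i+2)) Lv (XX^(j*j) * L n n) := by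
    intro Lv hLv
    have key : (Pr (i+2*j) * Pr i) * (Lv - XX^(j*j) * L n n)
        = XX^(j*j) * (L n n * (Pr n * Pr n - Pr (i+2*j) * Pr i)) := by
      linear_combination hLv - XX^(j*j) * hC
    have hd2 : XX^(j*j + (2*i+2)) ∣ (Pr (i+2*j) * Pr i) * (Lv - XX^(j*j) * L n n) := by
      rw [key, pow_add]
      exact mul_dvd_mul dvd_rfl (hdvd.mul_left (L n n))
    have hmd : md (j*j + (2*i+2)) ((Pr (i+2*j) * Pr i) * Lv)
        ((Pr (i+2*j) * Pr i) * (XX^(j*j) * L n n)) := by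
      rw [md, show (Pr (i+2*j) * Pr i) * Lv - (Pr (i+2*j) * Pr i) * (XX^(j*j) * L n n)
        = (Pr (i+2*j) * Pr i) * (Lv - XX^(j*j) * L n n) by ring]
      exact hd2
    exact md_cancel_unit ((isUnit_Pr (i+2*j)).mul (isUnit_Pr i)) hmd
  exact ⟨docase _ hA, docase _ hB⟩


lemma tri3 (q : ℕ) : 3*q ≤ q*q + 2 := by
  rcases q with _ | _ | q
  · omega
  · omega
  · nlinarith

lemma prod_split (n : ℕ) : Pr (2*n)
    = (∏ k ∈ Finset.range n, (1 - XX^(4*k+4))) * ∏ k ∈ Finset.range n, (1 - XX^(4*k+2)) := by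
  induction n with
  | zero => simp [Pr_zero]
  | succ n ih =>
    have e1 : Pr (2*n+1) = Pr (2*n) * (1 - XX^(4*n+2)) := Pr_step (by omega) (by omega)
    have e2 : Pr (2*(n+1)) = Pr (2*n+1) * (1 - XX^(4*n+4)) := Pr_step (by omega) (by omega)
    rw [e2, e1, ih, Finset.prod_range_succ, Finset.prod_range_succ]
    ring

lemma prodA (n : ℕ) : Pr n * ∏ k ∈ Finset.range n, (1 + XX^(2*k+2))
    = ∏ k ∈ Finset.range n, (1 - XX^(4*k+4)) := by
  rw [Pr, ← Finset.prod_mul_distrib]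
  refine Finset.prod_congr rfl (fun k _ => ?_)
  have h : XX^(2*k+2) * XX^(2*k+2) = XX^(4*k+4) := by rw [← pow_add]; congr 1; omega
  linear_combination -h

lemma prodD (n : ℕ) : ∏ k ∈ Finset.range (n+1), (1 + XX^(2*k))
    = 2 * ∏ k ∈ Finset.range n, (1 + XX^(2*k+2)) := by
  rw [Finset.prod_range_succ' (fun k => (1 + XX^(2*k))) n]
  rw [Finset.prod_congr rfl (fun k _ => show (1:PowerSeries ℤ) + XX^(2*(k+1)) = 1 + XX^(2*k+2) by
    rw [show 2*(k+1) = 2*k+2 by omega])]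
  norm_num
  ring

lemma isUnit_A4 (n : ℕ) : IsUnit (∏ k ∈ Finset.range n, ((1:PowerSeries ℤ) - XX^(4*k+4))) := by
  rw [PowerSeries.isUnit_iff_constantCoeff, map_prod]
  have : ∀ k ∈ Finset.range n,
      PowerSeries.constantCoeff (1 - XX^(4*k+4)) = 1 := by
    intro k _
    rw [map_sub, map_pow]
    simp
  rw [Finset.prod_congr rfl this]
  simp

lemma main_md (n : ℕ) (hn : 1 ≤ n) :
    md n (∏ k ∈ Finset.range n, (1 - XX^(4*k+4)))
      ((∑ p ∈ Finset.range n, XX^(p*(p+1))) * ∏ k ∈ Finset.range n, (1 - XX^(4*k+2))) := by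
  obtain ⟨n0, rfl⟩ : ∃ n0, n = n0 + 1 := ⟨n - 1, by omega⟩
  set n := n0 + 1 with hns
  have cong1 : md (3*n) (∑ m ∈ Finset.range (2*n+1), XX^m * L n m)
      (∑ m ∈ Finset.range (2*n+1), XX^(m + ((m-n)*(m-n) + (n-m)*(n-m))) * L n n) := by
    apply md_sum
    intro m hm
    have hm' : m < 2*n+1 := Finset.mem_range.mp hm
    rcases le_or_gt m n with h | h
    · have hc := (L_cong n m (n-m) (by omega)).2
      have h2 := md_mul_pow (m := m) hc
      have h3 : XX^m * (XX^((n-m)*(n-m)) * L n n)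
          = XX^(m + ((m-n)*(m-n) + (n-m)*(n-m))) * L n n := by
        rw [← mul_assoc, ← pow_add]
        congr 2
        have e0 : m - n = 0 := by omega
        rw [e0]; ring
      rw [h3] at h2
      refine md_of_le h2 ?_
      have h4 := tri3 (n - m)
      have h5 : m + (n - m) = n := by omega
      nlinarith [h4, h5]
    · have hc := (L_cong n (n-(m-n)) (m-n) (by omega)).1
      rw [show (n-(m-n)) + 2*(m-n) = m by omega] at hc
      have h2 := md_mul_pow (m := m) hc
      have h3 : XX^m * (XX^((m-n)*(m-n)) * L n n)
          = XX^(m + ((m-n)*(m-n) + (n-m)*(n-m))) * L n n := by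
        rw [← mul_assoc, ← pow_add]
        congr 2
        have e0 : n - m = 0 := by omega
        rw [e0]; ring
      rw [h3] at h2
      refine md_of_le h2 ?_
      have h4 : (m-n) ≤ (m-n)*(m-n) + 2 := by nlinarith
      have h5 : m = n + (m-n) := by omega
      have h6 : (n - (m-n)) + (m-n) = n := by omega
      nlinarith [h4, h5, h6]
  have pull : (∑ m ∈ Finset.range (2*n+1), XX^(m + ((m-n)*(m-n) + (n-m)*(n-m))) * L n n)
      = (XX^n * (2*(∑ p ∈ Finset.range n, XX^(p*(p+1))) + XX^(n*(n+1)))) * L n n := by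
    rw [← Finset.sum_mul, sqsum]
  rw [pull, Esum n] at cong1
  rw [show 3*n = n + 2*n by omega] at cong1
  have cong1' : md (n + 2*n)
      (XX^n * (∏ k ∈ Finset.range n, ((1 + XX^(2*k+2)) * (1 + XX^(2*k)))))
      (XX^n * ((2*(∑ p ∈ Finset.range n, XX^(p*(p+1))) + XX^(n*(n+1))) * L n n)) := by
    refine md_trans (md_of_eq rfl) (md_trans cong1 (md_of_eq (by ring)))
  have cong2 := md_cancel_Xpow cong1'
  have cong3 : md (2*n) (∏ k ∈ Finset.range n, ((1 + XX^(2*k+2)) * (1 + XX^(2*k))))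
      (2*(∑ p ∈ Finset.range n, XX^(p*(p+1))) * L n n) := by
    refine md_trans cong2 ?_
    have hz : md (2*n) (XX^(n*(n+1))) 0 := md_pow_zero (by nlinarith)
    refine md_trans (md_mul (md_add (md_refl _ _) hz) (md_refl _ (L n n))) (md_of_eq (by ring))
  have cong5 := md_mul_left (a := Pr n * Pr n) cong3
  have eqL : Pr n * Pr n * (∏ k ∈ Finset.range n, ((1 + XX^(2*k+2)) * (1 + XX^(2*k))))
      = (∏ k ∈ Finset.range n, (1 - XX^(4*k+4)))
        * (2 * ((1 - XX^(2*n0+2)) * ∏ k ∈ Finset.range n0, (1 - XX^(4*k+4)))) := by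
    rw [Finset.prod_mul_distrib]
    have hC0 : (∏ k ∈ Finset.range n, (1 + XX^(2*k)))
        = 2 * ∏ k ∈ Finset.range n0, (1 + XX^(2*k+2)) := prodD n0
    have hPr : Pr n = Pr n0 * (1 - XX^(2*n0+2)) := Pr_step (by omega) (by omega)
    calc Pr n * Pr n * ((∏ k ∈ Finset.range n, (1 + XX^(2*k+2)))
            * (∏ k ∈ Finset.range n, (1 + XX^(2*k))))
        = (Pr n * ∏ k ∈ Finset.range n, (1 + XX^(2*k+2)))
          * (2 * ((1 - XX^(2*n0+2)) * (Pr n0 * ∏ k ∈ Finset.range n0, (1 + XX^(2*k+2))))) := by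
          rw [hC0, hPr]; ring
      _ = _ := by rw [prodA, prodA]
  have eqR : Pr n * Pr n * (2*(∑ p ∈ Finset.range n, XX^(p*(p+1))) * L n n)
      = 2 * ((∑ p ∈ Finset.range n, XX^(p*(p+1)))
          * ((∏ k ∈ Finset.range n, (1 - XX^(4*k+4))) * ∏ k ∈ Finset.range n, (1 - XX^(4*k+2)))) := by
    rw [← prod_split]
    have := central n
    linear_combination (2*(∑ p ∈ Finset.range n, XX^(p*(p+1)))) * this
  rw [eqL, eqR] at cong5
  -- replace (1 - XX^(2*n0+2)) * A4n0 by A4 n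
  have step1 : md (2*n) ((1 - XX^(2*n0+2)) * ∏ k ∈ Finset.range n0, (1 - XX^(4*k+4)))
      (∏ k ∈ Finset.range n0, (1 - XX^(4*k+4))) := by
    rw [md, show (1 - XX^(2*n0+2)) * (∏ k ∈ Finset.range n0, (1 - XX^(4*k+4)))
        - (∏ k ∈ Finset.range n0, (1 - XX^(4*k+4)))
      = -(XX^(2*n0+2) * ∏ k ∈ Finset.range n0, (1 - XX^(4*k+4))) by ring]
    exact ((pow_dvd_pow XX (by omega : 2*n ≤ 2*n0+2)).mul_right _).neg_right
  have step2 : md (2*n) (∏ k ∈ Finset.range n0, (1 - XX^(4*k+4)))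
      (∏ k ∈ Finset.range n, (1 - XX^(4*k+4))) := by
    rw [md, Finset.prod_range_succ, show (∏ k ∈ Finset.range n0, (1 - XX^(4*k+4)))
        - (∏ k ∈ Finset.range n0, (1 - XX^(4*k+4))) * (1 - XX^(4*n0+4))
      = XX^(4*n0+4) * ∏ k ∈ Finset.range n0, (1 - XX^(4*k+4)) by ring]
    exact (pow_dvd_pow XX (by omega : 2*n ≤ 4*n0+4)).mul_right _
  have hAA : md (2*n)
      ((2 * ∏ k ∈ Finset.range n, (1 - XX^(4*k+4))) * (∏ k ∈ Finset.range n, (1 - XX^(4*k+4))))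
      ((2 * ∏ k ∈ Finset.range n, (1 - XX^(4*k+4)))
        * ((1 - XX^(2*n0+2)) * ∏ k ∈ Finset.range n0, (1 - XX^(4*k+4)))) :=
    md_mul_left (md_symm (md_trans step1 step2))
  have eq2 : ((2 * ∏ k ∈ Finset.range n, (1 - XX^(4*k+4)))
        * ((1 - XX^(2*n0+2)) * ∏ k ∈ Finset.range n0, (1 - XX^(4*k+4))))
      = (∏ k ∈ Finset.range n, (1 - XX^(4*k+4)))
        * (2 * ((1 - XX^(2*n0+2)) * ∏ k ∈ Finset.range n0, (1 - XX^(4*k+4)))) := by ring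
  have eq3 : (2 * ((∑ p ∈ Finset.range n, XX^(p*(p+1)))
          * ((∏ k ∈ Finset.range n, (1 - XX^(4*k+4))) * ∏ k ∈ Finset.range n, (1 - XX^(4*k+2)))))
      = 2 * ((∏ k ∈ Finset.range n, (1 - XX^(4*k+4)))
          * ((∑ p ∈ Finset.range n, XX^(p*(p+1))) * ∏ k ∈ Finset.range n, (1 - XX^(4*k+2)))) := by
    ring
  have eq1 : (2 : PowerSeries ℤ) * ((∏ k ∈ Finset.range n, (1 - XX^(4*k+4))) * (∏ k ∈ Finset.range n, (1 - XX^(4*k+4))))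
      = (2 * ∏ k ∈ Finset.range n, (1 - XX^(4*k+4))) * (∏ k ∈ Finset.range n, (1 - XX^(4*k+4))) := by
    ring
  have cong6 : md (2*n)
      (2 * ((∏ k ∈ Finset.range n, (1 - XX^(4*k+4))) * (∏ k ∈ Finset.range n, (1 - XX^(4*k+4)))))
      (2 * ((∏ k ∈ Finset.range n, (1 - XX^(4*k+4)))
        * ((∑ p ∈ Finset.range n, XX^(p*(p+1))) * ∏ k ∈ Finset.range n, (1 - XX^(4*k+2))))) :=
    md_trans (md_of_eq eq1) (md_trans hAA (md_trans (md_of_eq eq2)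
      (md_trans cong5 (md_of_eq eq3))))
  have cong7 := md_cancel_unit (isUnit_A4 n) (md_cancel_two cong6)
  exact md_of_le cong7 (by omega)

end AbeAux

/-- Identity (4.24) of Abe's paper after `q ↦ q⁴`:
`∏_{k=1}^∞ (1 - q^{4k}) = (∑_{p=0}^∞ q^{p(p+1)}) · ∏_{k=1}^∞ (1 - q^{4k-2})` in `ℤ[[q]]`,
interpreted formally via truncations (partial products converge q-adically). -/
theorem abe_char_identity :
    ∀ d : ℕ,
      PowerSeries.trunc d
        (∏ k ∈ Finset.range d, ((1 - PowerSeries.X ^ (4 * (k + 1))) : PowerSeries ℤ)) =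
      PowerSeries.trunc d
        ((∑ p ∈ Finset.range d, (PowerSeries.X ^ (p * (p + 1)) : PowerSeries ℤ)) *
          ∏ k ∈ Finset.range d, ((1 - PowerSeries.X ^ (4 * (k + 1) - 2)) : PowerSeries ℤ)) := by
  intro d
  apply AbeAux.md_trunc
  have eqA : (∏ k ∈ Finset.range d, ((1 - PowerSeries.X ^ (4 * (k + 1))) : PowerSeries ℤ))
      = ∏ k ∈ Finset.range d, (1 - AbeAux.XX^(4*k+4)) :=
    Finset.prod_congr rfl (fun k _ => by rw [show 4*(k+1) = 4*k+4 by omega])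
  have eqB : (∏ k ∈ Finset.range d, ((1 - PowerSeries.X ^ (4 * (k + 1) - 2)) : PowerSeries ℤ))
      = ∏ k ∈ Finset.range d, (1 - AbeAux.XX^(4*k+2)) :=
    Finset.prod_congr rfl (fun k _ => by rw [show 4*(k+1)-2 = 4*k+2 by omega])
  rw [eqA, eqB]
  rcases Nat.eq_zero_or_pos d with rfl | hd
  · rw [AbeAux.md]
    simpa using one_dvd _
  · exact AbeAux.main_md d hd
end

section
/- Let V be a complex vector space with operators L(n), n ∈ ℤ, satisfying the Virasoro relations with central charge 1: [L(m), L(n)] = (m-n)L(m+n) + ((m³-m)/12)·δ_{m+n,0}·id. Suppose w ∈ V satisfies L(n)w = 0 for n ≥ 1 and L(0)w = (9/4)w. Then the vector u = 18L(-4)w - 14L(-3)L(-1)w - 9L(-2)²w + 10L(-2)L(-1)²w - L(-1)⁴w satisfies L(1)u = 0 and L(2)u = 0. -/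
/-- Virasoro computation at central charge 1: if `w` is a lowest weight vector of
weight `9/4`, then `u = 18L(-4)w - 14L(-3)L(-1)w - 9L(-2)²w + 10L(-2)L(-1)²w - L(-1)⁴w`
satisfies `L(1)u = 0` and `L(2)u = 0`. -/
theorem virasoro_singular_vector_nine_quarters
    {V : Type*} [AddCommGroup V] [Module ℂ V] (L : ℤ → Module.End ℂ V)
    (hL : ∀ m n : ℤ, L m ∘ₗ L n - L n ∘ₗ L m =
      ((m - n : ℤ) : ℂ) • L (m + n) +
        (if m + n = 0 then (((m : ℂ) ^ 3 - (m : ℂ)) / 12) • (1 : Module.End ℂ V) else 0))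
    (w : V) (hw : ∀ n : ℤ, 1 ≤ n → L n w = 0) (h0 : L 0 w = (9 / 4 : ℂ) • w) :
    L 1 ((18 : ℂ) • L (-4) w - (14 : ℂ) • L (-3) (L (-1) w) -
        (9 : ℂ) • L (-2) (L (-2) w) + (10 : ℂ) • L (-2) (L (-1) (L (-1) w)) -
        L (-1) (L (-1) (L (-1) (L (-1) w)))) = 0 ∧
    L 2 ((18 : ℂ) • L (-4) w - (14 : ℂ) • L (-3) (L (-1) w) -
        (9 : ℂ) • L (-2) (L (-2) w) + (10 : ℂ) • L (-2) (L (-1) (L (-1) w)) -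
        L (-1) (L (-1) (L (-1) (L (-1) w)))) = 0 := by
  have comm : ∀ m n : ℤ, ∀ v : V, L m (L n v) = L n (L m v) +
      (((m : ℂ) - (n : ℂ)) • L (m + n) v +
        (if m + n = 0 then (((m : ℂ) ^ 3 - (m : ℂ)) / 12) • v else 0)) := by
    intro m n v
    have h := congrArg (fun f : Module.End ℂ V => f v) (hL m n)
    simp only [LinearMap.sub_apply, LinearMap.add_apply, LinearMap.smul_apply,
      Module.End.mul_apply, LinearMap.comp_apply, Module.End.one_apply] at h
    rw [sub_eq_iff_eq_add] at h
    rw [h]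
    push_cast
    split_ifs <;> simp <;> abel
  -- basic facts
  have hw1 : L 1 w = 0 := hw 1 le_rfl
  have hw2 : L 2 w = 0 := hw 2 (by norm_num)
  have hw3 : L 3 w = 0 := hw 3 (by norm_num)
  -- L 0 on stacks
  have h0a : L 0 (L (-1) w) = (13/4 : ℂ) • L (-1) w := by
    rw [comm 0 (-1) w]; simp [h0, hw1]; module
  have h0b : L 0 (L (-2) w) = (17/4 : ℂ) • L (-2) w := by
    rw [comm 0 (-2) w]; simp [h0, hw2]; module
  have h0c : L 0 (L (-1) (L (-1) w)) = (17/4 : ℂ) • L (-1) (L (-1) w) := by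
    rw [comm 0 (-1) (L (-1) w)]; simp [h0a]; module
  have h0d : L 0 (L (-1) (L (-1) (L (-1) w))) = (21/4 : ℂ) • L (-1) (L (-1) (L (-1) w)) := by
    rw [comm 0 (-1) (L (-1) (L (-1) w))]; simp [h0c]; module
  -- L 1 on depth-1
  have a1 : L 1 (L (-1) w) = (9/2 : ℂ) • w := by
    rw [comm 1 (-1) w]; simp [hw1, h0]; module
  have a2 : L 1 (L (-2) w) = (3 : ℂ) • L (-1) w := by
    rw [comm 1 (-2) w]; simp [hw1]; module
  have a3 : L 1 (L (-3) w) = (4 : ℂ) • L (-2) w := by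
    rw [comm 1 (-3) w]; simp [hw1]; module
  have a4 : L 1 (L (-4) w) = (5 : ℂ) • L (-3) w := by
    rw [comm 1 (-4) w]; simp [hw1]; module
  -- L 2 on depth-1
  have b1 : L 2 (L (-1) w) = 0 := by
    rw [comm 2 (-1) w]; simp [hw1, hw2]
  have b2 : L 2 (L (-2) w) = (19/2 : ℂ) • w := by
    rw [comm 2 (-2) w]; simp [hw2, h0]; module
  have b3 : L 2 (L (-3) w) = (5 : ℂ) • L (-1) w := by
    rw [comm 2 (-3) w]; simp [hw2]; module
  have b4 : L 2 (L (-4) w) = (6 : ℂ) • L (-2) w := by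
    rw [comm 2 (-4) w]; simp [hw2]; module
  -- reordering
  have r1 : L (-1) (L (-2) w) = L (-2) (L (-1) w) + L (-3) w := by
    rw [comm (-1) (-2) w]; simp; module
  -- L 1 on depth-2
  have c1 : L 1 (L (-1) (L (-1) w)) = (11 : ℂ) • L (-1) w := by
    rw [comm 1 (-1) (L (-1) w)]; simp [a1, h0a]; module
  have c2 : L 1 (L (-3) (L (-1) w)) =
      (9/2 : ℂ) • L (-3) w + (4 : ℂ) • L (-2) (L (-1) w) := by
    rw [comm 1 (-3) (L (-1) w)]; simp [a1, map_smul]; module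
  have c3 : L 1 (L (-2) (L (-2) w)) =
      (6 : ℂ) • L (-2) (L (-1) w) + (3 : ℂ) • L (-3) w := by
    rw [comm 1 (-2) (L (-2) w)]; simp [a2, r1, map_smul]; module
  have c4 : L 1 (L (-2) (L (-1) (L (-1) w))) =
      (11 : ℂ) • L (-2) (L (-1) w) + (3 : ℂ) • L (-1) (L (-1) (L (-1) w)) := by
    rw [comm 1 (-2) (L (-1) (L (-1) w))]; simp [c1, map_smul]; module
  have c5 : L 1 (L (-1) (L (-1) (L (-1) w))) = (39/2 : ℂ) • L (-1) (L (-1) w) := by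
    rw [comm 1 (-1) (L (-1) (L (-1) w))]; simp [c1, h0c, map_smul]; module
  have c6 : L 1 (L (-1) (L (-1) (L (-1) (L (-1) w)))) =
      (30 : ℂ) • L (-1) (L (-1) (L (-1) w)) := by
    rw [comm 1 (-1) (L (-1) (L (-1) (L (-1) w)))]; simp [c5, h0d, map_smul]; module
  -- L 2 on depth-2
  have d1 : L 2 (L (-1) (L (-1) w)) = (27/2 : ℂ) • w := by
    rw [comm 2 (-1) (L (-1) w)]; simp [b1, a1, map_smul]; module
  have d2 : L 2 (L (-3) (L (-1) w)) = (5 : ℂ) • L (-1) (L (-1) w) := by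
    rw [comm 2 (-3) (L (-1) w)]; simp [b1]; module
  have d3 : L 2 (L (-2) (L (-2) w)) = (27 : ℂ) • L (-2) w := by
    rw [comm 2 (-2) (L (-2) w)]; simp [b2, h0b, map_smul]; module
  have d4 : L 2 (L (-2) (L (-1) (L (-1) w))) =
      (27/2 : ℂ) • L (-2) w + (35/2 : ℂ) • L (-1) (L (-1) w) := by
    rw [comm 2 (-2) (L (-1) (L (-1) w))]; simp [d1, h0c, map_smul]; module
  have d5 : L 2 (L (-1) (L (-1) (L (-1) w))) = (93/2 : ℂ) • L (-1) w := by
    rw [comm 2 (-1) (L (-1) (L (-1) w))]; simp [d1, c1, map_smul]; module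
  have d6 : L 2 (L (-1) (L (-1) (L (-1) (L (-1) w)))) =
      (105 : ℂ) • L (-1) (L (-1) w) := by
    rw [comm 2 (-1) (L (-1) (L (-1) (L (-1) w)))]; simp [d5, c5, map_smul]; module
  constructor
  · simp only [map_sub, map_add, map_smul, a4, c2, c3, c4, c6]
    module
  · simp only [map_sub, map_add, map_smul, b4, d2, d3, d4, d6]
    module
end
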